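/- arXiv:1312.5960 — 3 statements merged into one kernel-verified Lean document; each statement's English description precedes it below -/
import Mathlib

section
/- Let 0 < α < κ, λ > 0, s > 0, and let f : ℝ² → ℂ be in the homogeneous Sobolev space Ḣ^{α/2} with e^{λ s^{α/κ} Λ^α} f ∈ Ḣ^{κ/2}, where Λ = (−Δ)^{1/2}. Then e^{λ s^{α/κ} Λ^α} f ∈ Ḣ^{α/2} and ‖e^{λ s^{α/κ}Λ^α} f‖²_{Ḣ^{α/2}} ≤ e ‖f‖²_{Ḣ^{α/2}} + (2λ)^{κ/α − 1} s^{1 − α/κ} ‖e^{λ s^{α/κ}Λ^α} f‖²_{Ḣ^{κ/2}}. -/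
/-!
With `x = c |ξ|^α` and `m = κ/α - 1 ≥ 0`, the elementary inequality `e^x ≤ e + x^m e^x`
(split at `x = 1`) multiplied by `|ξ|^α |𝓕f(ξ)|²` gives a pointwise bound whose second term
is `c^m |ξ|^κ e^{c|ξ|^α} |𝓕f(ξ)|²`, since `α m = κ - α`. Integrating this bound, and noting
`c^m = (2λ)^m s^{1 - α/κ}` for `c = 2λ s^{α/κ}`, gives the theorem.
-/

open MeasureTheory FourierTransform

lemma Real.exp_le_exp_one_add_rpow_mul_exp {x m : ℝ} (hx : 0 ≤ x) (hm : 0 ≤ m) :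
    Real.exp x ≤ Real.exp 1 + x ^ m * Real.exp x := by
  rcases le_or_gt x 1 with h | h
  · have : Real.exp x ≤ Real.exp 1 := Real.exp_le_exp.2 h
    nlinarith [Real.rpow_nonneg hx m, Real.exp_pos x]
  · have : (1 : ℝ) ≤ x ^ m := Real.one_le_rpow h.le hm
    nlinarith [Real.exp_pos x, Real.exp_pos 1]

lemma Real.rpow_mul_exp_le {α κ c t : ℝ} (hα : 0 < α) (hακ : α ≤ κ) (hc : 0 ≤ c)
    (ht : 0 ≤ t) :
    t ^ α * Real.exp (c * t ^ α) ≤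
      Real.exp 1 * t ^ α + c ^ (κ / α - 1) * (t ^ κ * Real.exp (c * t ^ α)) := by
  rcases ht.eq_or_lt with rfl | ht
  · rw [Real.zero_rpow hα.ne', Real.zero_rpow (hα.trans_le hακ).ne']
    simp
  have hm : 0 ≤ κ / α - 1 := by rw [sub_nonneg, le_div_iff₀ hα]; linarith
  have hpow : (c * t ^ α) ^ (κ / α - 1) * t ^ α = c ^ (κ / α - 1) * t ^ κ := by
    rw [Real.mul_rpow hc (by positivity), ← Real.rpow_mul ht.le, mul_assoc,
      ← Real.rpow_add ht]
    congr 2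
    field_simp
    ring
  calc t ^ α * Real.exp (c * t ^ α)
      ≤ t ^ α * (Real.exp 1 + (c * t ^ α) ^ (κ / α - 1) * Real.exp (c * t ^ α)) :=
        mul_le_mul_of_nonneg_left
          (Real.exp_le_exp_one_add_rpow_mul_exp (by positivity) hm) (by positivity)
    _ = Real.exp 1 * t ^ α + c ^ (κ / α - 1) * (t ^ κ * Real.exp (c * t ^ α)) := by
        linear_combination Real.exp (c * t ^ α) * hpow

lemma MeasureTheory.integrable_and_integral_le_of_le_add {X : Type*} [MeasurableSpace X]
    {μ : Measure X} {F g h : X → ℝ} {a b : ℝ} (hF : AEStronglyMeasurable F μ) (hF0 : 0 ≤ F)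
    (hg : Integrable g μ) (hh : Integrable h μ) (hle : ∀ x, F x ≤ a * g x + b * h x) :
    Integrable F μ ∧ ∫ x, F x ∂μ ≤ a * ∫ x, g x ∂μ + b * ∫ x, h x ∂μ := by
  have hbound : Integrable (fun x => a * g x + b * h x) μ :=
    (hg.const_mul a).add (hh.const_mul b)
  have hFint : Integrable F μ :=
    hbound.mono' hF (.of_forall fun x => by rw [Real.norm_of_nonneg (hF0 x)]; exact hle x)
  refine ⟨hFint, ?_⟩
  calc ∫ x, F x ∂μ ≤ ∫ x, (a * g x + b * h x) ∂μ := integral_mono hFint hbound hle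
    _ = a * ∫ x, g x ∂μ + b * ∫ x, h x ∂μ := by
        rw [integral_add (hg.const_mul a) (hh.const_mul b), integral_const_mul,
          integral_const_mul]

theorem gevrey_interpolation (α κ lam s : ℝ) (hα : 0 < α) (hακ : α < κ)
    (hlam : 0 < lam) (hs : 0 < s) (f : EuclideanSpace ℝ (Fin 2) → ℂ)
    (h1 : Integrable (fun ξ : EuclideanSpace ℝ (Fin 2) => ‖ξ‖ ^ α * ‖𝓕 f ξ‖ ^ 2))
    (h2 : Integrable (fun ξ : EuclideanSpace ℝ (Fin 2) =>
      ‖ξ‖ ^ κ * Real.exp (2 * lam * s ^ (α / κ) * ‖ξ‖ ^ α) * ‖𝓕 f ξ‖ ^ 2)) :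
    Integrable (fun ξ : EuclideanSpace ℝ (Fin 2) =>
        ‖ξ‖ ^ α * Real.exp (2 * lam * s ^ (α / κ) * ‖ξ‖ ^ α) * ‖𝓕 f ξ‖ ^ 2) ∧
    (∫ ξ : EuclideanSpace ℝ (Fin 2),
        ‖ξ‖ ^ α * Real.exp (2 * lam * s ^ (α / κ) * ‖ξ‖ ^ α) * ‖𝓕 f ξ‖ ^ 2) ≤
      Real.exp 1 * (∫ ξ : EuclideanSpace ℝ (Fin 2), ‖ξ‖ ^ α * ‖𝓕 f ξ‖ ^ 2) +
        (2 * lam) ^ (κ / α - 1) * s ^ (1 - α / κ) *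
          (∫ ξ : EuclideanSpace ℝ (Fin 2),
            ‖ξ‖ ^ κ * Real.exp (2 * lam * s ^ (α / κ) * ‖ξ‖ ^ α) * ‖𝓕 f ξ‖ ^ 2) := by
  set c := 2 * lam * s ^ (α / κ)
  have hc : 0 ≤ c := by positivity
  have hcpow : c ^ (κ / α - 1) = (2 * lam) ^ (κ / α - 1) * s ^ (1 - α / κ) := by
    rw [Real.mul_rpow (by positivity) (by positivity), ← Real.rpow_mul hs.le]
    congr 2
    field_simp [(hα.trans hακ).ne']
  rw [← hcpow]
  have hmeas : AEStronglyMeasurable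
      (fun ξ : EuclideanSpace ℝ (Fin 2) => ‖ξ‖ ^ α * Real.exp (c * ‖ξ‖ ^ α) * ‖𝓕 f ξ‖ ^ 2) := by
    simp_rw [mul_right_comm _ (Real.exp _)]
    refine h1.aestronglyMeasurable.mul (Continuous.aestronglyMeasurable ?_)
    exact Real.continuous_exp.comp (continuous_const.mul (continuous_norm.rpow_const
      fun _ => Or.inr hα.le))
  refine integrable_and_integral_le_of_le_add hmeas (fun ξ => by positivity) h1 h2 fun ξ => ?_
  have := mul_le_mul_of_nonneg_right (Real.rpow_mul_exp_le hα hακ.le hc (norm_nonneg ξ))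
    (sq_nonneg ‖𝓕 f ξ‖)
  linarith
end

section
/- Let θ₀ : ℝ² → ℂ with θ₀ ∈ Ḣ^{2−κ}, 0 < α < κ ≤ 1, λ > 0, β > 0. Then there is a constant C independent of θ₀ and T such that sup_{0 < s ≤ T} s^{β/κ} ‖e^{λ s^{α/κ}Λ^α} e^{−sΛ^κ} θ₀‖_{Ḣ^{2−κ+β}} ≤ C ‖θ₀‖_{Ḣ^{2−κ}}. -/
/-!
Under the substitution `x = s^{1/κ} |ξ|`, the multiplier
`s^{2β/κ} |ξ|^{2β} exp (2λ s^{α/κ} |ξ|^α - 2 s |ξ|^κ)` becomes `x^{2β} exp (2λ x^α - 2 x^κ)`,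
which is bounded on `[0, ∞)` by some `M` independent of `s`: since `α < κ`, Young's inequality gives
`2λ x^α ≤ x^κ + C`, and `y^p e^{-y}` is bounded. Multiplying by `|ξ|^{2(2-κ)} |𝓕 θ₀ ξ|²` and
integrating gives the estimate with `C = √M`.
-/

open MeasureTheory FourierTransform

theorem exists_mul_rpow_le_rpow_add {α κ : ℝ} (hα : 0 < α) (hακ : α < κ) (c : ℝ) :
    ∃ C, ∀ x : ℝ, 0 ≤ x → c * x ^ α ≤ x ^ κ + C := by
  have hp : 1 < κ / α := (one_lt_div hα).2 hακ
  set q := Real.conjExponent (κ / α)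
  refine ⟨|c| ^ q / q, fun x hx => ?_⟩
  have young := Real.young_inequality (x ^ α) c (.conjExponent hp)
  have hpow : |x ^ α| ^ (κ / α) = x ^ κ := by
    rw [abs_of_nonneg (Real.rpow_nonneg hx α), ← Real.rpow_mul hx, mul_div_cancel₀ _ hα.ne']
  have hxκ : x ^ κ / (κ / α) ≤ x ^ κ :=
    div_le_self (Real.rpow_nonneg hx κ) hp.le
  rw [hpow] at young
  linarith [mul_comm c (x ^ α)]

theorem rpow_mul_exp_neg_le {p y : ℝ} (hp : 0 < p) (hy : 0 ≤ y) :
    y ^ p * Real.exp (-y) ≤ p ^ p * Real.exp (-p) := by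
  have h : (y / p) ^ p ≤ Real.exp (y - p) := by
    calc (y / p) ^ p ≤ Real.exp (y / p - 1) ^ p := by
          gcongr
          linarith [Real.add_one_le_exp (y / p - 1)]
      _ = Real.exp (y - p) := by
          rw [← Real.exp_mul]; field_simp
  calc y ^ p * Real.exp (-y) = p ^ p * ((y / p) ^ p * Real.exp (-y)) := by
        rw [Real.div_rpow hy hp.le]; field_simp
    _ ≤ p ^ p * (Real.exp (y - p) * Real.exp (-y)) := by gcongr
    _ = p ^ p * Real.exp (-p) := by rw [← Real.exp_add]; ring_nf

theorem exists_rpow_mul_exp_sub_le {α κ p : ℝ} (hα : 0 < α) (hακ : α < κ) (hp : 0 < p) (c : ℝ) :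
    ∃ M, ∀ x : ℝ, 0 ≤ x → x ^ p * Real.exp (c * x ^ α - 2 * x ^ κ) ≤ M := by
  have hκ : 0 < κ := hα.trans hακ
  obtain ⟨C, hC⟩ := exists_mul_rpow_le_rpow_add hα hακ c
  refine ⟨(p / κ) ^ (p / κ) * Real.exp (-(p / κ)) * Real.exp C, fun x hx => ?_⟩
  have hxκ : 0 ≤ x ^ κ := Real.rpow_nonneg hx κ
  calc x ^ p * Real.exp (c * x ^ α - 2 * x ^ κ)
      ≤ (x ^ κ) ^ (p / κ) * (Real.exp (-x ^ κ) * Real.exp C) := by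
        rw [← Real.rpow_mul hx, mul_div_cancel₀ _ hκ.ne', ← Real.exp_add]
        gcongr
        linarith [hC x hx]
    _ ≤ (p / κ) ^ (p / κ) * Real.exp (-(p / κ)) * Real.exp C := by
        rw [← mul_assoc]
        exact mul_le_mul_of_nonneg_right (rpow_mul_exp_neg_le (by positivity) hxκ) (by positivity)

theorem rpow_mul_gevrey_symbol_le {α κ lam β m M s r : ℝ} (hκ : κ ≠ 0)
    (hM : ∀ x : ℝ, 0 ≤ x → x ^ (2 * β) * Real.exp (2 * lam * x ^ α - 2 * x ^ κ) ≤ M)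
    (hs : 0 < s) (hr : 0 < r) :
    s ^ (2 * β / κ) * (r ^ (2 * (m + β)) * Real.exp (2 * lam * s ^ (α / κ) * r ^ α) *
      Real.exp (-(2 * s * r ^ κ))) ≤ M * r ^ (2 * m) := by
  set x := s ^ (1 / κ) * r
  have hx : ∀ γ, x ^ γ = s ^ (γ / κ) * r ^ γ := fun γ => by
    rw [Real.mul_rpow (by positivity) hr.le, ← Real.rpow_mul hs.le, one_div_mul_eq_div]
  have hxκ : x ^ κ = s * r ^ κ := by rw [hx, div_self hκ, Real.rpow_one]
  have hscale : s ^ (2 * β / κ) * (r ^ (2 * (m + β)) * Real.exp (2 * lam * s ^ (α / κ) * r ^ α) *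
      Real.exp (-(2 * s * r ^ κ))) =
      r ^ (2 * m) * (x ^ (2 * β) * Real.exp (2 * lam * x ^ α - 2 * x ^ κ)) := by
    rw [hx, hx, hxκ, mul_add, Real.rpow_add hr, sub_eq_add_neg, Real.exp_add]
    ring_nf
  rw [hscale, mul_comm M]
  gcongr
  exact hM x (by positivity)

theorem linear_gevrey_estimate_general (α κ lam β : ℝ) (hα : 0 < α) (hακ : α < κ)
    (hβ : 0 < β) :
    ∃ C : ℝ, ∀ θ₀ : EuclideanSpace ℝ (Fin 2) → ℂ,
      Integrable (fun ξ : EuclideanSpace ℝ (Fin 2) =>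
        ‖ξ‖ ^ (2 * (2 - κ)) * ‖𝓕 θ₀ ξ‖ ^ 2) →
      ∀ T : ℝ, 0 < T → ∀ s : ℝ, 0 < s → s ≤ T →
        s ^ (β / κ) *
          Real.sqrt (∫ ξ : EuclideanSpace ℝ (Fin 2),
            ‖ξ‖ ^ (2 * (2 - κ + β)) *
              Real.exp (2 * lam * s ^ (α / κ) * ‖ξ‖ ^ α) *
                Real.exp (-(2 * s * ‖ξ‖ ^ κ)) * ‖𝓕 θ₀ ξ‖ ^ 2) ≤
        C * Real.sqrt (∫ ξ : EuclideanSpace ℝ (Fin 2),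
            ‖ξ‖ ^ (2 * (2 - κ)) * ‖𝓕 θ₀ ξ‖ ^ 2) := by
  obtain ⟨M, hM⟩ := exists_rpow_mul_exp_sub_le hα hακ (by positivity : 0 < 2 * β) (2 * lam)
  have hM0 : 0 ≤ M := (by positivity : (0 : ℝ) ≤ _).trans (hM 0 le_rfl)
  refine ⟨√M, fun θ₀ hG _ _ s hs _ => ?_⟩
  have hint : s ^ (2 * β / κ) * ∫ ξ : EuclideanSpace ℝ (Fin 2), ‖ξ‖ ^ (2 * (2 - κ + β)) *
        Real.exp (2 * lam * s ^ (α / κ) * ‖ξ‖ ^ α) * Real.exp (-(2 * s * ‖ξ‖ ^ κ)) * ‖𝓕 θ₀ ξ‖ ^ 2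
      ≤ M * ∫ ξ : EuclideanSpace ℝ (Fin 2), ‖ξ‖ ^ (2 * (2 - κ)) * ‖𝓕 θ₀ ξ‖ ^ 2 := by
    rw [← integral_const_mul, ← integral_const_mul]
    refine integral_mono_of_nonneg (.of_forall fun ξ => by positivity) (hG.const_mul M) ?_
    filter_upwards [volume.ae_ne 0] with ξ hξ
    have := rpow_mul_gevrey_symbol_le (m := 2 - κ) (hα.trans hακ).ne' hM hs (norm_pos_iff.2 hξ)
    simpa only [mul_assoc] using mul_le_mul_of_nonneg_right this (sq_nonneg ‖𝓕 θ₀ ξ‖)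
  have hsq : s ^ (2 * β / κ) = (s ^ (β / κ)) ^ 2 := by
    rw [← Real.rpow_natCast, ← Real.rpow_mul hs.le]; ring_nf
  calc _ = √(s ^ (2 * β / κ) * _) := by
        rw [Real.sqrt_mul (by positivity), hsq, Real.sqrt_sq (by positivity)]
    _ ≤ √(M * _) := Real.sqrt_le_sqrt hint
    _ = √M * _ := Real.sqrt_mul hM0 _

theorem linear_gevrey_estimate (α κ lam β : ℝ) (hα : 0 < α) (hακ : α < κ)
    (hκ : κ ≤ 1) (hlam : 0 < lam) (hβ : 0 < β) :
    ∃ C : ℝ, ∀ θ₀ : EuclideanSpace ℝ (Fin 2) → ℂ,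
      Integrable (fun ξ : EuclideanSpace ℝ (Fin 2) =>
        ‖ξ‖ ^ (2 * (2 - κ)) * ‖𝓕 θ₀ ξ‖ ^ 2) →
      ∀ T : ℝ, 0 < T → ∀ s : ℝ, 0 < s → s ≤ T →
        s ^ (β / κ) *
          Real.sqrt (∫ ξ : EuclideanSpace ℝ (Fin 2),
            ‖ξ‖ ^ (2 * (2 - κ + β)) *
              Real.exp (2 * lam * s ^ (α / κ) * ‖ξ‖ ^ α) *
                Real.exp (-(2 * s * ‖ξ‖ ^ κ)) * ‖𝓕 θ₀ ξ‖ ^ 2) ≤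
        C * Real.sqrt (∫ ξ : EuclideanSpace ℝ (Fin 2),
            ‖ξ‖ ^ (2 * (2 - κ)) * ‖𝓕 θ₀ ξ‖ ^ 2) :=
  linear_gevrey_estimate_general α κ lam β hα hακ hβ
end

section
/- With the assumptions of the previous linear estimate, if moreover θ₀ ∈ Ḣ^{2−κ+β}, then there is a constant C (independent of s, θ₀) with ‖e^{λ s^{α/κ}Λ^α} e^{−sΛ^κ} θ₀‖_{Ḣ^{2−κ+β}} ≤ C ‖θ₀‖_{Ḣ^{2−κ+β}} for all s > 0. -/
/-! The Gevrey multiplier `exp (λ s^{α/κ} |ξ|^α)` is dominated by the heat multiplier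
`exp (s |ξ|^κ)` uniformly in `s` and `ξ`: with `t = s |ξ|^κ` the exponent difference is
`λ t^{α/κ} - t`, and since `α/κ < 1` weighted AM-GM bounds this by `λ^{1/(1-α/κ)}`. The
estimate is then a pointwise bound on the Fourier side. -/

open MeasureTheory FourierTransform

theorem mul_rpow_sub_le_rpow_inv_one_sub {γ c t : ℝ} (hγ0 : 0 ≤ γ) (hγ1 : γ < 1)
    (hc : 0 ≤ c) (ht : 0 ≤ t) : c * t ^ γ - t ≤ c ^ (1 - γ)⁻¹ := by
  have hamgm : t ^ γ * (c ^ (1 - γ)⁻¹) ^ (1 - γ) ≤ γ * t + (1 - γ) * c ^ (1 - γ)⁻¹ :=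
    Real.geom_mean_le_arith_mean2_weighted hγ0 (by linarith) ht
      (Real.rpow_nonneg hc _) (by ring)
  rw [Real.rpow_inv_rpow hc (by linarith)] at hamgm
  nlinarith [Real.rpow_nonneg hc (1 - γ)⁻¹]

theorem gevrey_exponent_sub_heat_exponent_le {α κ lam s r : ℝ} (hα : 0 < α) (hακ : α < κ)
    (hlam : 0 ≤ lam) (hs : 0 ≤ s) (hr : 0 ≤ r) :
    lam * s ^ (α / κ) * r ^ α - s * r ^ κ ≤ lam ^ (1 - α / κ)⁻¹ := by
  have hκ : 0 < κ := hα.trans hακ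
  have hsubst : s ^ (α / κ) * r ^ α = (s * r ^ κ) ^ (α / κ) := by
    rw [Real.mul_rpow hs (Real.rpow_nonneg hr κ), ← Real.rpow_mul hr,
      mul_div_cancel₀ α hκ.ne']
  rw [mul_assoc, hsubst]
  exact mul_rpow_sub_le_rpow_inv_one_sub (div_pos hα hκ).le ((div_lt_one hκ).mpr hακ) hlam
    (mul_nonneg hs (Real.rpow_nonneg hr κ))

theorem exp_gevrey_mul_exp_neg_heat_le {α κ lam s r : ℝ} (hα : 0 < α) (hακ : α < κ)
    (hlam : 0 ≤ lam) (hs : 0 ≤ s) (hr : 0 ≤ r) :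
    Real.exp (2 * lam * s ^ (α / κ) * r ^ α) * Real.exp (-(2 * s * r ^ κ)) ≤
      Real.exp (2 * lam ^ (1 - α / κ)⁻¹) := by
  rw [← Real.exp_add, Real.exp_le_exp]
  linarith [gevrey_exponent_sub_heat_exponent_le hα hακ hlam hs hr]

theorem sqrt_integral_mul_le_of_le {X : Type*} [MeasurableSpace X] {μ : Measure X}
    {m f : X → ℝ} {M : ℝ} (hm : ∀ x, m x ≤ M) (hm0 : ∀ x, 0 ≤ m x) (hf0 : ∀ x, 0 ≤ f x)
    (hf : Integrable f μ) :
    √(∫ x, m x * f x ∂μ) ≤ √M * √(∫ x, f x ∂μ) := by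
  rw [← Real.sqrt_mul' M (integral_nonneg hf0), ← integral_const_mul]
  refine Real.sqrt_le_sqrt (integral_mono_of_nonneg (ae_of_all _ fun x => ?_)
    (hf.const_mul M) (ae_of_all _ fun x => ?_))
  · exact mul_nonneg (hm0 x) (hf0 x)
  · exact mul_le_mul_of_nonneg_right (hm x) (hf0 x)

theorem linear_gevrey_estimate_smooth_data_general (α κ lam β : ℝ) (hα : 0 < α) (hακ : α < κ)
    (hlam : 0 < lam) :
    ∃ C : ℝ, ∀ θ₀ : EuclideanSpace ℝ (Fin 2) → ℂ,
      Integrable (fun ξ : EuclideanSpace ℝ (Fin 2) =>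
        ‖ξ‖ ^ (2 * (2 - κ + β)) * ‖𝓕 θ₀ ξ‖ ^ 2) →
      ∀ s : ℝ, 0 < s →
        Real.sqrt (∫ ξ : EuclideanSpace ℝ (Fin 2),
            ‖ξ‖ ^ (2 * (2 - κ + β)) *
              Real.exp (2 * lam * s ^ (α / κ) * ‖ξ‖ ^ α) *
                Real.exp (-(2 * s * ‖ξ‖ ^ κ)) * ‖𝓕 θ₀ ξ‖ ^ 2) ≤
        C * Real.sqrt (∫ ξ : EuclideanSpace ℝ (Fin 2),
            ‖ξ‖ ^ (2 * (2 - κ + β)) * ‖𝓕 θ₀ ξ‖ ^ 2) := by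
  refine ⟨√(Real.exp (2 * lam ^ (1 - α / κ)⁻¹)), fun θ₀ hint s hs => ?_⟩
  have hbound := sqrt_integral_mul_le_of_le
    (m := fun ξ : EuclideanSpace ℝ (Fin 2) =>
      Real.exp (2 * lam * s ^ (α / κ) * ‖ξ‖ ^ α) * Real.exp (-(2 * s * ‖ξ‖ ^ κ)))
    (fun ξ => exp_gevrey_mul_exp_neg_heat_le hα hακ hlam.le hs.le (norm_nonneg ξ))
    (fun ξ => by positivity) (fun ξ => by positivity) hint
  refine (congrArg Real.sqrt (integral_congr_ae (ae_of_all _ fun ξ => ?_))).trans_le hbound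
  ring

theorem linear_gevrey_estimate_smooth_data (α κ lam β : ℝ) (hα : 0 < α) (hακ : α < κ)
    (hκ : κ ≤ 1) (hlam : 0 < lam) (hβ : 0 < β) :
    ∃ C : ℝ, ∀ θ₀ : EuclideanSpace ℝ (Fin 2) → ℂ,
      Integrable (fun ξ : EuclideanSpace ℝ (Fin 2) =>
        ‖ξ‖ ^ (2 * (2 - κ + β)) * ‖𝓕 θ₀ ξ‖ ^ 2) →
      ∀ s : ℝ, 0 < s →
        Real.sqrt (∫ ξ : EuclideanSpace ℝ (Fin 2),
            ‖ξ‖ ^ (2 * (2 - κ + β)) *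
              Real.exp (2 * lam * s ^ (α / κ) * ‖ξ‖ ^ α) *
                Real.exp (-(2 * s * ‖ξ‖ ^ κ)) * ‖𝓕 θ₀ ξ‖ ^ 2) ≤
        C * Real.sqrt (∫ ξ : EuclideanSpace ℝ (Fin 2),
            ‖ξ‖ ^ (2 * (2 - κ + β)) * ‖𝓕 θ₀ ξ‖ ^ 2) :=
  linear_gevrey_estimate_smooth_data_general α κ lam β hα hακ hlam
end
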